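/- Let s > 0, α > 2, c ≥ 0 and 0 < ρ₀ < s/√2. Then ∫_{S₀(s) \ B(0, ρ₀)} Σ_{z ∈ ℤ²} log(1 + c·‖u + s·z‖^{−α}) du ≤ 2π ∫_{ρ₀}^{∞} v·log(1 + c·v^{−α}) dv, where the left-hand side is a Lebesgue integral over the set S₀(s) \ B(0, ρ₀) ⊂ ℝ², and the right-hand integral is finite. -/

import Mathlib

open MeasureTheory Real

/-- The grid point `s·z = (s z₁, s z₂)` for `z ∈ ℤ²`. -/
noncomputable def gridPt (s : ℝ) (k : ℤ × ℤ) : EuclideanSpace ℝ (Fin 2) :=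
  (WithLp.equiv 2 (Fin 2 → ℝ)).symm ![s * (k.1 : ℝ), s * (k.2 : ℝ)]

/-- The square `S₀(s) = [−s/2, s/2] × [−s/2, s/2]`. -/
def square (s : ℝ) : Set (EuclideanSpace ℝ (Fin 2)) :=
  {u | u 0 ∈ Set.Icc (-(s / 2)) (s / 2) ∧ u 1 ∈ Set.Icc (-(s / 2)) (s / 2)}

/-! ### Auxiliary lemmas -/

lemma log_term_nonneg {c : ℝ} (hc : 0 ≤ c) {r : ℝ} (hr : 0 ≤ r) (α : ℝ) :
    0 ≤ Real.log (1 + c * r ^ (-α)) :=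
  Real.log_nonneg (by nlinarith [Real.rpow_nonneg hr (-α)])

lemma log_term_le {c : ℝ} (hc : 0 ≤ c) {r : ℝ} (hr : 0 ≤ r) (α : ℝ) :
    Real.log (1 + c * r ^ (-α)) ≤ c * r ^ (-α) := by
  have h : (0:ℝ) < 1 + c * r ^ (-α) := by nlinarith [Real.rpow_nonneg hr (-α)]
  have := Real.log_le_sub_one_of_pos h
  linarith

lemma measurable_log_term (c α : ℝ) :
    Measurable fun x : EuclideanSpace ℝ (Fin 2) => Real.log (1 + c * ‖x‖ ^ (-α)) :=
  Real.measurable_log.comp (by fun_prop)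

lemma part1_lemma {α c ρ₀ : ℝ} (hα : 2 < α) (hc : 0 ≤ c) (hρ₀ : 0 < ρ₀) :
    IntegrableOn (fun v : ℝ => v * Real.log (1 + c * v ^ (-α))) (Set.Ioi ρ₀) volume := by
  have hmaj : IntegrableOn (fun v : ℝ => c * v ^ (1 - α)) (Set.Ioi ρ₀) volume :=
    (integrableOn_Ioi_rpow_of_lt (by linarith) hρ₀).const_mul c
  refine hmaj.mono' ?_ ?_
  · exact (measurable_id.mul (Real.measurable_log.comp (by fun_prop))).aestronglyMeasurable
  · filter_upwards [ae_restrict_mem measurableSet_Ioi] with v hv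
    have hv0 : 0 < v := lt_trans hρ₀ hv
    rw [Real.norm_eq_abs, abs_of_nonneg (mul_nonneg hv0.le (log_term_nonneg hc hv0.le α))]
    calc v * Real.log (1 + c * v ^ (-α)) ≤ v * (c * v ^ (-α)) :=
          mul_le_mul_of_nonneg_left (log_term_le hc hv0.le α) hv0.le
      _ = c * v ^ (1 - α) := by
          rw [sub_eq_add_neg, Real.rpow_add hv0, Real.rpow_one]; ring

lemma sq_le_shift {s : ℝ} (hs : 0 < s) {a : ℝ} (ha : |a| ≤ s / 2) (k : ℤ) :
    a ^ 2 ≤ (a + s * k) ^ 2 := by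
  rcases eq_or_ne k 0 with rfl | hk
  · simp
  · have h1 : (1:ℝ) ≤ |(k:ℝ)| := by exact_mod_cast Int.one_le_abs hk
    have h2 : s ≤ |s * k| := by
      rw [abs_mul, abs_of_pos hs]; nlinarith
    have h3 : |s * k| - |a| ≤ |a + s * k| := by
      have h := abs_add_le (a + s * k) (-a)
      rw [show a + s * (k:ℝ) + -a = s * k by ring, abs_neg] at h
      linarith
    have h4 : |a| ≤ |a + s * (k:ℝ)| := by linarith
    calc a ^ 2 = |a| ^ 2 := (sq_abs a).symm
      _ ≤ |a + s * k| ^ 2 := by gcongr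
      _ = (a + s * k) ^ 2 := sq_abs _

lemma norm_le_norm_add_gridPt {s : ℝ} (hs : 0 < s) {u : EuclideanSpace ℝ (Fin 2)}
    (h0 : |u 0| ≤ s / 2) (h1 : |u 1| ≤ s / 2) (z : ℤ × ℤ) :
    ‖u‖ ≤ ‖u + gridPt s z‖ := by
  rw [EuclideanSpace.norm_eq, EuclideanSpace.norm_eq]
  apply Real.sqrt_le_sqrt
  rw [Fin.sum_univ_two, Fin.sum_univ_two]
  have e0 : (u + gridPt s z) 0 = u 0 + s * z.1 := rfl
  have e1 : (u + gridPt s z) 1 = u 1 + s * z.2 := rfl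
  rw [e0, e1]
  simp only [Real.norm_eq_abs, sq_abs]
  exact add_le_add (sq_le_shift hs h0 z.1) (sq_le_shift hs h1 z.2)

lemma int_eq_of_shift {s : ℝ} (hs : 0 < s) {a a' : ℝ}
    (ha : a ∈ Set.Ico (-(s/2)) (s/2)) (ha' : a' ∈ Set.Ico (-(s/2)) (s/2))
    {k k' : ℤ} (h : a + s * k = a' + s * k') : k = k' := by
  have h1 : |a' - a| < s := by
    rw [abs_sub_lt_iff]
    constructor <;>
      · have := ha.1; have := ha.2; have := ha'.1; have := ha'.2; linarith
  have heq : s * ((k:ℝ) - k') = a' - a := by linarith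
  have h2 : s * |(k:ℝ) - k'| < s := by
    calc s * |(k:ℝ) - k'| = |s * ((k:ℝ) - k')| := by rw [abs_mul, abs_of_pos hs]
      _ = |a' - a| := by rw [heq]
      _ < s := h1
  have h3 : |(k:ℝ) - k'| < 1 := by nlinarith [abs_nonneg ((k:ℝ) - k')]
  have h4 : |k - k'| < 1 := by
    have : |((k - k' : ℤ) : ℝ)| < 1 := by push_cast; exact h3
    exact_mod_cast this
  have := Int.abs_lt_one_iff.mp h4
  omega

lemma vol_line (i : Fin 2) (a : ℝ) : volume {u : EuclideanSpace ℝ (Fin 2) | u i = a} = 0 := by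
  have hset : {f : Fin 2 → ℝ | f i = a} = (fun f : Fin 2 → ℝ => f i) ⁻¹' {a} := rfl
  have hm : NullMeasurableSet {f : Fin 2 → ℝ | f i = a} volume := by
    rw [hset]
    exact ((measurable_pi_apply i) (measurableSet_singleton a)).nullMeasurableSet
  have h := (EuclideanSpace.volume_preserving_symm_measurableEquiv_toLp (Fin 2)).measure_preimage hm
  have hpre : (MeasurableEquiv.toLp 2 (Fin 2 → ℝ)).symm ⁻¹' {f : Fin 2 → ℝ | f i = a}
      = {u : EuclideanSpace ℝ (Fin 2) | u i = a} := rfl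
  rw [hpre] at h
  rw [h]
  refine le_antisymm ?_ zero_le
  calc volume {f : Fin 2 → ℝ | f i = a}
      ≤ volume (Set.pi Set.univ (fun j => if j = i then ({a} : Set ℝ) else Set.univ)) :=
        measure_mono (fun f hf => Set.mem_univ_pi.2 fun j => by
          by_cases hj : j = i <;> simp [hj, Set.mem_setOf_eq.mp hf])
    _ = 0 := by
        rw [volume_pi_pi]
        refine Finset.prod_eq_zero (Finset.mem_univ i) ?_
        simp

lemma intF {α c ρ₀ : ℝ} (hα : 2 < α) (hc : 0 ≤ c) (hρ₀ : 0 < ρ₀) :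
    IntegrableOn (fun x : EuclideanSpace ℝ (Fin 2) => Real.log (1 + c * ‖x‖ ^ (-α)))
      (Metric.closedBall 0 ρ₀)ᶜ volume := by
  set K : ℝ := (1 + ρ₀⁻¹) ^ α with hK
  have hK0 : 0 < K := Real.rpow_pos_of_pos (by positivity) α
  have hmaj : IntegrableOn (fun x : EuclideanSpace ℝ (Fin 2) => c * K * (1 + ‖x‖) ^ (-α))
      (Metric.closedBall 0 ρ₀)ᶜ volume := by
    refine Integrable.integrableOn ?_
    have h2 : ((Module.finrank ℝ (EuclideanSpace ℝ (Fin 2)) : ℝ)) < α := by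
      rw [finrank_euclideanSpace_fin]; exact_mod_cast hα
    exact (integrable_one_add_norm h2).const_mul _
  refine hmaj.mono' ((Real.measurable_log.comp (by fun_prop)).aestronglyMeasurable) ?_
  filter_upwards [ae_restrict_mem (measurableSet_closedBall.compl)] with x hx
  have hxρ : ρ₀ < ‖x‖ := by
    simpa [Metric.mem_closedBall, dist_zero_right] using hx
  have hx0 : 0 < ‖x‖ := lt_trans hρ₀ hxρ
  rw [Real.norm_eq_abs, abs_of_nonneg (log_term_nonneg hc (norm_nonneg x) α)]
  have step1 : Real.log (1 + c * ‖x‖ ^ (-α)) ≤ c * ‖x‖ ^ (-α) :=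
    log_term_le hc (norm_nonneg x) α
  have step2 : ‖x‖ ^ (-α) ≤ K * (1 + ‖x‖) ^ (-α) := by
    have hb : (0:ℝ) < 1 + ‖x‖ := by positivity
    have hle : 1 + ‖x‖ ≤ (1 + ρ₀⁻¹) * ‖x‖ := by
      have : 1 ≤ ρ₀⁻¹ * ‖x‖ := by
        rw [← inv_mul_cancel₀ hρ₀.ne']
        exact mul_le_mul_of_nonneg_left hxρ.le (by positivity)
      nlinarith
    have hpow : (1 + ‖x‖) ^ α ≤ K * ‖x‖ ^ α := by
      calc (1 + ‖x‖) ^ α ≤ ((1 + ρ₀⁻¹) * ‖x‖) ^ α :=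
            Real.rpow_le_rpow hb.le hle (by linarith)
        _ = K * ‖x‖ ^ α := Real.mul_rpow (by positivity) (norm_nonneg x)
    rw [Real.rpow_neg (norm_nonneg x), Real.rpow_neg hb.le]
    rw [inv_eq_one_div, inv_eq_one_div, ← mul_div_assoc, mul_one]
    rw [div_le_div_iff₀ (Real.rpow_pos_of_pos hx0 α) (Real.rpow_pos_of_pos hb α)]
    nlinarith [Real.rpow_pos_of_pos hx0 α, Real.rpow_pos_of_pos hb α]
  calc Real.log (1 + c * ‖x‖ ^ (-α)) ≤ c * ‖x‖ ^ (-α) := step1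
    _ ≤ c * (K * (1 + ‖x‖) ^ (-α)) := mul_le_mul_of_nonneg_left step2 hc
    _ = c * K * (1 + ‖x‖) ^ (-α) := by ring

lemma polar_eq (α c ρ₀ : ℝ) (hρ₀ : 0 < ρ₀) :
    ∫ x in (Metric.closedBall (0 : EuclideanSpace ℝ (Fin 2)) ρ₀)ᶜ,
        Real.log (1 + c * ‖x‖ ^ (-α))
      = 2 * π * ∫ v in Set.Ioi ρ₀, v * Real.log (1 + c * v ^ (-α)) := by
  set f : ℝ → ℝ := fun r => Real.log (1 + c * r ^ (-α)) with hf
  have key := integral_fun_norm_addHaar (volume : Measure (EuclideanSpace ℝ (Fin 2)))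
    (Set.indicator (Set.Ioi ρ₀) f)
  have hdim : Module.finrank ℝ (EuclideanSpace ℝ (Fin 2)) = 2 := finrank_euclideanSpace_fin
  rw [hdim] at key
  have hball : (volume (Metric.ball (0 : EuclideanSpace ℝ (Fin 2)) 1)).toReal = π := by
    rw [EuclideanSpace.volume_ball]
    norm_num [Real.sq_sqrt pi_nonneg, Real.Gamma_two, ENNReal.toReal_ofReal pi_nonneg]
  rw [measureReal_def, hball] at key
  have hL : (fun x : EuclideanSpace ℝ (Fin 2) => Set.indicator (Set.Ioi ρ₀) f ‖x‖)
      = Set.indicator (Metric.closedBall (0 : EuclideanSpace ℝ (Fin 2)) ρ₀)ᶜ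
          (fun x => Real.log (1 + c * ‖x‖ ^ (-α))) := by
    funext x
    by_cases hx : ρ₀ < ‖x‖
    · rw [Set.indicator_of_mem (Set.mem_Ioi.2 hx),
        Set.indicator_of_mem (by simpa [Metric.mem_closedBall, dist_zero_right] using hx)]
    · rw [Set.indicator_of_notMem (by simpa using hx),
        Set.indicator_of_notMem (by simpa [Metric.mem_closedBall, dist_zero_right] using hx)]
  rw [hL, integral_indicator measurableSet_closedBall.compl] at key
  have hR : ∀ y : ℝ, y ^ (2 - 1) • Set.indicator (Set.Ioi ρ₀) f y
      = Set.indicator (Set.Ioi ρ₀) (fun v => v * f v) y := by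
    intro y
    by_cases hy : y ∈ Set.Ioi ρ₀
    · rw [Set.indicator_of_mem hy, Set.indicator_of_mem hy]; simp
    · rw [Set.indicator_of_notMem hy, Set.indicator_of_notMem hy]; simp
  simp only [hR] at key
  rw [setIntegral_indicator measurableSet_Ioi] at key
  have hinter : Set.Ioi (0:ℝ) ∩ Set.Ioi ρ₀ = Set.Ioi ρ₀ :=
    Set.inter_eq_self_of_subset_right (fun y hy => lt_trans hρ₀ (Set.mem_Ioi.1 hy))
  rw [hinter] at key
  rw [key]
  simp [smul_eq_mul]
  ring

/-- Campbell/intensity-measure bound, eqs. (81)–(82): for `α > 2`, `c ≥ 0`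
and `0 < ρ₀ < s/√2`, the right-hand integral is finite and
`∫_{S₀(s)\B(0,ρ₀)} Σ_{z ∈ ℤ²} log(1 + c‖u + s·z‖^{−α}) du ≤ 2π ∫_{ρ₀}^∞ v log(1 + c v^{−α}) dv`. -/
theorem campbell_bound_grid_interference
    (s α c ρ₀ : ℝ) (hs : 0 < s) (hα : 2 < α) (hc : 0 ≤ c)
    (hρ₀ : 0 < ρ₀) (hρ₀' : ρ₀ < s / Real.sqrt 2) :
    IntegrableOn (fun v : ℝ => v * Real.log (1 + c * v ^ (-α))) (Set.Ioi ρ₀) volume ∧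
    (∫ u in square s \ Metric.closedBall 0 ρ₀,
        ∑' z : ℤ × ℤ, Real.log (1 + c * ‖u + gridPt s z‖ ^ (-α)))
      ≤ 2 * π * ∫ v in Set.Ioi ρ₀, v * Real.log (1 + c * v ^ (-α)) := by
  refine ⟨part1_lemma hα hc hρ₀, ?_⟩
  set g : EuclideanSpace ℝ (Fin 2) → ENNReal :=
    fun x => ENNReal.ofReal (Real.log (1 + c * ‖x‖ ^ (-α))) with hgdef
  have hgmeas : Measurable g := (measurable_log_term c α).ennreal_ofReal
  set R : ℝ := 2 * π * ∫ v in Set.Ioi ρ₀, v * Real.log (1 + c * v ^ (-α)) with hRdef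
  have hR0 : 0 ≤ R := by
    refine mul_nonneg (by positivity) (setIntegral_nonneg measurableSet_Ioi fun v hv => ?_)
    have hv0 : 0 ≤ v := (lt_trans hρ₀ hv).le
    exact mul_nonneg hv0 (log_term_nonneg hc hv0 α)
  set D : Set (EuclideanSpace ℝ (Fin 2)) := square s \ Metric.closedBall 0 ρ₀ with hD
  set Q : Set (EuclideanSpace ℝ (Fin 2)) :=
    (fun u : EuclideanSpace ℝ (Fin 2) => u 0) ⁻¹' Set.Ico (-(s/2)) (s/2) ∩
    (fun u : EuclideanSpace ℝ (Fin 2) => u 1) ⁻¹' Set.Ico (-(s/2)) (s/2) with hQ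
  set D' : Set (EuclideanSpace ℝ (Fin 2)) := Q \ Metric.closedBall 0 ρ₀ with hD'
  have hproj : ∀ i : Fin 2, Measurable fun u : EuclideanSpace ℝ (Fin 2) => u i := by
    intro i; fun_prop
  have hQm : MeasurableSet Q :=
    ((hproj 0) measurableSet_Ico).inter ((hproj 1) measurableSet_Ico)
  have hD'm : MeasurableSet D' := hQm.diff measurableSet_closedBall
  -- D and D' agree up to null sets
  have hDae : D =ᵐ[volume] D' := by
    rw [MeasureTheory.ae_eq_set]
    constructor
    · refine measure_mono_null ?_
        (measure_union_null (vol_line 0 (s/2)) (vol_line 1 (s/2)))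
      rintro u ⟨⟨⟨hu0, hu1⟩, hub⟩, hu'⟩
      have hnotQ : u ∉ Q := fun hQu => hu' ⟨hQu, hub⟩
      rw [hQ] at hnotQ
      simp only [Set.mem_inter_iff, Set.mem_preimage, Set.mem_Ico, not_and_or,
        not_lt, not_le] at hnotQ
      rcases hnotQ with (h | h) | (h | h)
      · exact absurd hu0.1 (not_le.mpr h)
      · left
        show u 0 = s / 2
        exact le_antisymm hu0.2 h
      · exact absurd hu1.1 (not_le.mpr h)
      · right
        show u 1 = s / 2
        exact le_antisymm hu1.2 h
    · have hsub : D' ⊆ D := by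
        rintro u ⟨⟨hq0, hq1⟩, hub⟩
        exact ⟨⟨⟨hq0.1, hq0.2.le⟩, ⟨hq1.1, hq1.2.le⟩⟩, hub⟩
      rw [Set.diff_eq_empty.2 hsub]
      exact measure_empty
  -- translates of D' avoid the ball
  have hsubset : ∀ z : ℤ × ℤ,
      ((· + gridPt s z) '' D') ⊆ (Metric.closedBall (0 : EuclideanSpace ℝ (Fin 2)) ρ₀)ᶜ := by
    rintro z x ⟨u, hu, rfl⟩
    have h0 : |u 0| ≤ s/2 := abs_le.2 ⟨hu.1.1.1, hu.1.1.2.le⟩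
    have h1 : |u 1| ≤ s/2 := abs_le.2 ⟨hu.1.2.1, hu.1.2.2.le⟩
    have hnorm : ρ₀ < ‖u‖ := by
      have := hu.2
      simpa [Metric.mem_closedBall, dist_zero_right] using this
    have hge := norm_le_norm_add_gridPt hs h0 h1 z
    simp only [Set.mem_compl_iff, Metric.mem_closedBall, dist_zero_right, not_le]
    linarith
  -- translates of D' are pairwise disjoint
  have hdisj : Pairwise (Function.onFun Disjoint
      fun z : ℤ × ℤ => (· + gridPt s z) '' D') := by
    intro z z' hne
    rw [Function.onFun, Set.disjoint_left]
    rintro x ⟨u, hu, rfl⟩ ⟨u', hu', heq⟩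
    apply hne
    have h0 : u' 0 + s * z'.1 = u 0 + s * z.1 := congrArg (fun v => v 0) heq
    have h1 : u' 1 + s * z'.2 = u 1 + s * z.2 := congrArg (fun v => v 1) heq
    have e1 : z'.1 = z.1 := int_eq_of_shift hs hu'.1.1 hu.1.1 h0
    have e2 : z'.2 = z.2 := int_eq_of_shift hs hu'.1.2 hu.1.2 h1
    exact (Prod.ext e1 e2).symm
  have hmeasIm : ∀ z : ℤ × ℤ, MeasurableSet ((· + gridPt s z) '' D') := fun z =>
    (measurableEmbedding_addRight (gridPt s z)).measurableSet_image.2 hD'm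
  -- the key lintegral bound
  have hlint : ∫⁻ u in D, ∑' z : ℤ × ℤ, g (u + gridPt s z) ≤ ENNReal.ofReal R := by
    calc ∫⁻ u in D, ∑' z : ℤ × ℤ, g (u + gridPt s z)
        = ∫⁻ u in D', ∑' z : ℤ × ℤ, g (u + gridPt s z) := setLIntegral_congr hDae
      _ = ∑' z : ℤ × ℤ, ∫⁻ u in D', g (u + gridPt s z) :=
          lintegral_tsum fun z =>
            (hgmeas.comp (measurable_add_const (gridPt s z))).aemeasurable
      _ = ∑' z : ℤ × ℤ, ∫⁻ x in (· + gridPt s z) '' D', g x :=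
          tsum_congr fun z =>
            (measurePreserving_add_right volume (gridPt s z)).setLIntegral_comp_emb
              (measurableEmbedding_addRight (gridPt s z)) g D'
      _ = ∫⁻ x in ⋃ z : ℤ × ℤ, (· + gridPt s z) '' D', g x :=
          (lintegral_iUnion hmeasIm hdisj g).symm
      _ ≤ ∫⁻ x in (Metric.closedBall (0 : EuclideanSpace ℝ (Fin 2)) ρ₀)ᶜ, g x :=
          lintegral_mono_set (Set.iUnion_subset hsubset)
      _ = ENNReal.ofReal (∫ x in (Metric.closedBall (0 : EuclideanSpace ℝ (Fin 2)) ρ₀)ᶜ,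
            Real.log (1 + c * ‖x‖ ^ (-α))) :=
          (ofReal_integral_eq_lintegral_ofReal (intF hα hc hρ₀)
            (ae_of_all _ fun x => log_term_nonneg hc (norm_nonneg x) α)).symm
      _ = ENNReal.ofReal R := by rw [polar_eq α c ρ₀ hρ₀]
  -- conclude
  by_cases hint : IntegrableOn
      (fun u => ∑' z : ℤ × ℤ, Real.log (1 + c * ‖u + gridPt s z‖ ^ (-α))) D volume
  · have hnn : 0 ≤ᵐ[volume.restrict D]
        fun u => ∑' z : ℤ × ℤ, Real.log (1 + c * ‖u + gridPt s z‖ ^ (-α)) :=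
      ae_of_all _ fun u => tsum_nonneg fun z => log_term_nonneg hc (norm_nonneg _) α
    rw [integral_eq_lintegral_of_nonneg_ae hnn hint.aestronglyMeasurable]
    refine ENNReal.toReal_le_of_le_ofReal hR0 ?_
    refine le_trans (lintegral_mono fun u => ?_) hlint
    by_cases hsum : Summable fun z : ℤ × ℤ => Real.log (1 + c * ‖u + gridPt s z‖ ^ (-α))
    · rw [ENNReal.ofReal_tsum_of_nonneg
        (fun z => log_term_nonneg hc (norm_nonneg _) α) hsum]
    · rw [tsum_eq_zero_of_not_summable hsum]
      simp
  · rw [integral_undef hint]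
    exact hR0
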